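/- arXiv:2502.20467 — 3 statements merged into one kernel-verified Lean document; each statement's English description precedes it below -/
import Mathlib

section
/- For the log-logistic distribution with α > 0 and shape parameter β ≤ 1 with β > 0, the hazard function h_{α,β}(t) = β t^{β-1}/(t^β + α^β) is monotonically nonincreasing on (0, ∞). -/
open Real Set

theorem AntitoneOn.div_of_monotoneOn {ι G₀ : Type*} [Preorder ι] [GroupWithZero G₀] [PartialOrder G₀]
    [PosMulReflectLT G₀] [MulPosReflectLT G₀] {f g : ι → G₀} {s : Set ι}
    (hf : AntitoneOn f s) (hg : MonotoneOn g s) (hf₀ : ∀ x ∈ s, 0 ≤ f x) (hg₀ : ∀ x ∈ s, 0 < g x) :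
    AntitoneOn (fun x => f x / g x) s :=
  fun _ hx _ hy hxy => div_le_div₀ (hf₀ _ hx) (hf hx hy hxy) (hg₀ _ hx) (hg hx hy hxy)

/-- For `0 < β ≤ 1`, the log-logistic hazard `h(t) = β t^(β-1)/(t^β + α^β)` is
monotonically nonincreasing on `(0, ∞)`. -/
theorem loglogistic_hazard_antitone (α β : ℝ) (hα : 0 < α) (hβ : 0 < β) (hβ1 : β ≤ 1) :
    AntitoneOn (fun t : ℝ => β * t ^ (β - 1) / (t ^ β + α ^ β)) (Set.Ioi 0) := by
  have hnum : AntitoneOn (fun t : ℝ => β * t ^ (β - 1)) (Ioi 0) := fun _ hx _ hy hxy =>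
    mul_le_mul_of_nonneg_left
      (antitoneOn_rpow_Ioi_of_exponent_nonpos (by linarith) hx hy hxy) hβ.le
  have hden : MonotoneOn (fun t : ℝ => t ^ β + α ^ β) (Ioi 0) :=
    ((monotoneOn_rpow_Ici_of_exponent_nonneg hβ.le).mono Ioi_subset_Ici_self).add_const _
  refine hnum.div_of_monotoneOn hden (fun t ht => ?_) (fun t ht => ?_) <;>
  · have : 0 < t := ht
    positivity
end

section
/- Let p = (p₁, p₂) and q = (q₁, q₂) be probability vectors with positive entries (p₁ + p₂ = 1, q₁ + q₂ = 1). Define for γ > 0 the density power divergence D_γ(p, q) = (q₁^{γ+1} + q₂^{γ+1}) − ((γ+1)/γ)(p₁ q₁^γ + p₂ q₂^γ) + (1/γ)(p₁^{γ+1} + p₂^{γ+1}). Then as γ → 0⁺, D_γ(p, q) converges to the Kullback–Leibler divergence D_KL(p, q) = p₁ log(p₁/q₁) + p₂ log(p₂/q₂). -/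
open Real Filter

private lemma rpow_tendsto_one {x : ℝ} (hx : 0 < x) :
    Tendsto (fun γ : ℝ => x ^ γ) (nhdsWithin 0 (Set.Ioi 0)) (nhds 1) := by
  have h : Tendsto (fun γ : ℝ => Real.exp (Real.log x * γ)) (nhds 0) (nhds 1) := by
    have : Tendsto (fun γ : ℝ => Real.log x * γ) (nhds 0) (nhds 0) := by
      simpa using (tendsto_id (x := nhds (0:ℝ))).const_mul (Real.log x)
    simpa [Function.comp_def] using (Real.continuous_exp.tendsto 0).comp this
  have h' : Tendsto (fun γ : ℝ => Real.exp (Real.log x * γ)) (nhdsWithin 0 (Set.Ioi 0)) (nhds 1) :=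
    h.mono_left nhdsWithin_le_nhds
  exact h'.congr (fun γ => (Real.rpow_def_of_pos hx γ).symm)

private lemma slope_tendsto_log {x : ℝ} (hx : 0 < x) :
    Tendsto (fun γ : ℝ => (x ^ γ - 1) / γ) (nhdsWithin 0 (Set.Ioi 0))
      (nhds (Real.log x)) := by
  have hd : HasDerivAt (fun γ : ℝ => x ^ γ) (Real.log x) 0 := by
    have h1 : HasDerivAt (fun γ : ℝ => Real.log x * γ) (Real.log x) 0 := by
      simpa using (hasDerivAt_id (0 : ℝ)).const_mul (Real.log x)
    have h2 : HasDerivAt (fun γ : ℝ => Real.exp (Real.log x * γ)) (Real.log x) 0 := by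
      simpa [Function.comp_def] using (Real.hasDerivAt_exp (Real.log x * 0)).comp 0 h1
    exact h2.congr_of_eventuallyEq (Filter.Eventually.of_forall fun γ =>
      Real.rpow_def_of_pos hx γ)
  have hs := hasDerivAt_iff_tendsto_slope.mp hd
  have hle : nhdsWithin (0:ℝ) (Set.Ioi 0) ≤ nhdsWithin 0 {(0:ℝ)}ᶜ :=
    nhdsWithin_mono _ (fun y hy => ne_of_gt hy)
  have h3 := hs.mono_left hle
  refine h3.congr (fun γ => ?_)
  simp [slope, Real.rpow_zero, div_eq_inv_mul]

/-- As `γ → 0⁺`, the density power divergence between two-point probability vectors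
converges to the Kullback–Leibler divergence. -/
theorem dpd_tendsto_kl (p₁ p₂ q₁ q₂ : ℝ)
    (hp₁ : 0 < p₁) (hp₂ : 0 < p₂) (hq₁ : 0 < q₁) (hq₂ : 0 < q₂)
    (hp : p₁ + p₂ = 1) (hq : q₁ + q₂ = 1) :
    Tendsto (fun γ : ℝ =>
        (q₁ ^ (γ + 1) + q₂ ^ (γ + 1)) -
          ((γ + 1) / γ) * (p₁ * q₁ ^ γ + p₂ * q₂ ^ γ) +
          (1 / γ) * (p₁ ^ (γ + 1) + p₂ ^ (γ + 1)))
      (nhdsWithin 0 (Set.Ioi 0))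
      (nhds (p₁ * Real.log (p₁ / q₁) + p₂ * Real.log (p₂ / q₂))) := by
  have key : Tendsto (fun γ : ℝ =>
      ((q₁ * q₁ ^ γ + q₂ * q₂ ^ γ) - (p₁ * q₁ ^ γ + p₂ * q₂ ^ γ)) +
        (p₁ * ((p₁ ^ γ - 1) / γ - (q₁ ^ γ - 1) / γ) +
         p₂ * ((p₂ ^ γ - 1) / γ - (q₂ ^ γ - 1) / γ)))
      (nhdsWithin 0 (Set.Ioi 0))
      (nhds (p₁ * Real.log (p₁ / q₁) + p₂ * Real.log (p₂ / q₂))) := by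
    have hA : Tendsto (fun γ : ℝ =>
        (q₁ * q₁ ^ γ + q₂ * q₂ ^ γ) - (p₁ * q₁ ^ γ + p₂ * q₂ ^ γ))
        (nhdsWithin 0 (Set.Ioi 0)) (nhds 0) := by
      have t1 : Tendsto (fun γ : ℝ => q₁ * q₁ ^ γ + q₂ * q₂ ^ γ)
          (nhdsWithin 0 (Set.Ioi 0)) (nhds (q₁ * 1 + q₂ * 1)) :=
        (tendsto_const_nhds.mul (rpow_tendsto_one hq₁)).add
          (tendsto_const_nhds.mul (rpow_tendsto_one hq₂))
      have t2 : Tendsto (fun γ : ℝ => p₁ * q₁ ^ γ + p₂ * q₂ ^ γ)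
          (nhdsWithin 0 (Set.Ioi 0)) (nhds (p₁ * 1 + p₂ * 1)) :=
        (tendsto_const_nhds.mul (rpow_tendsto_one hq₁)).add
          (tendsto_const_nhds.mul (rpow_tendsto_one hq₂))
      simpa [hp, hq] using t1.sub t2
    have hB : Tendsto (fun γ : ℝ =>
        p₁ * ((p₁ ^ γ - 1) / γ - (q₁ ^ γ - 1) / γ) +
        p₂ * ((p₂ ^ γ - 1) / γ - (q₂ ^ γ - 1) / γ))
        (nhdsWithin 0 (Set.Ioi 0))
        (nhds (p₁ * Real.log (p₁ / q₁) + p₂ * Real.log (p₂ / q₂))) := by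
      have h1 : Tendsto (fun γ : ℝ => p₁ * ((p₁ ^ γ - 1) / γ - (q₁ ^ γ - 1) / γ))
          (nhdsWithin 0 (Set.Ioi 0)) (nhds (p₁ * (Real.log p₁ - Real.log q₁))) :=
        tendsto_const_nhds.mul ((slope_tendsto_log hp₁).sub (slope_tendsto_log hq₁))
      have h2 : Tendsto (fun γ : ℝ => p₂ * ((p₂ ^ γ - 1) / γ - (q₂ ^ γ - 1) / γ))
          (nhdsWithin 0 (Set.Ioi 0)) (nhds (p₂ * (Real.log p₂ - Real.log q₂))) :=
        tendsto_const_nhds.mul ((slope_tendsto_log hp₂).sub (slope_tendsto_log hq₂))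
      have := h1.add h2
      simpa [Real.log_div (ne_of_gt hp₁) (ne_of_gt hq₁),
        Real.log_div (ne_of_gt hp₂) (ne_of_gt hq₂)] using this
    simpa using hA.add hB
  refine key.congr' ?_
  filter_upwards [self_mem_nhdsWithin] with γ (hγ : 0 < γ)
  have e : ∀ x : ℝ, 0 < x → x ^ (γ + 1) = x ^ γ * x := fun x hx => by
    rw [Real.rpow_add hx, Real.rpow_one]
  rw [e _ hp₁, e _ hp₂, e _ hq₁, e _ hq₂]
  field_simp
  ring
end

section
/- For γ > 0 and probability vectors p = (p₁, p₂), q = (q₁, q₂) with entries in (0,1) and p₁+p₂ = q₁+q₂ = 1, the density power divergence D_γ(p,q) = (q₁^{γ+1}+q₂^{γ+1}) − ((γ+1)/γ)(p₁q₁^γ + p₂q₂^γ) + (1/γ)(p₁^{γ+1}+p₂^{γ+1}) is nonnegative, and equals zero if and only if p = q. -/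
/-!
The divergence is a sum over the two points of summands, each of which is `(γ + 1) / γ` times the
gap in Young's inequality `a * b ≤ a ^ P / P + b ^ Q / Q` for `a = p`, `b = q ^ γ` and the conjugate
exponents `P = γ + 1`, `Q = (γ + 1) / γ`. Each summand is therefore nonnegative, and it vanishes
exactly when `p ^ (γ + 1) = q ^ (γ + 1)`, i.e. `p = q`.
-/

open Real

noncomputable def dpdSummand (γ p q : ℝ) : ℝ :=
  q ^ (γ + 1) - (γ + 1) / γ * (p * q ^ γ) + 1 / γ * p ^ (γ + 1)

section

variable {γ p q : ℝ}

lemma holderConjugate_add_one_div (hγ : 0 < γ) : (γ + 1).HolderConjugate ((γ + 1) / γ) :=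
  Real.holderConjugate_iff.mpr ⟨by linarith, by field_simp; ring⟩

lemma rpow_rpow_add_one_div (hγ : γ ≠ 0) (hq : 0 ≤ q) :
    (q ^ γ) ^ ((γ + 1) / γ) = q ^ (γ + 1) := by
  rw [← rpow_mul hq, mul_div_cancel₀ _ hγ]

lemma dpdSummand_eq_youngGap (hγ : 0 < γ) (hq : 0 ≤ q) :
    dpdSummand γ p q =
      (γ + 1) / γ * (p ^ (γ + 1) / (γ + 1) + (q ^ γ) ^ ((γ + 1) / γ) / ((γ + 1) / γ) - p * q ^ γ) := by
  rw [rpow_rpow_add_one_div hγ.ne' hq, dpdSummand]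
  field_simp
  ring

lemma dpdSummand_nonneg (hγ : 0 < γ) (hp : 0 ≤ p) (hq : 0 ≤ q) : 0 ≤ dpdSummand γ p q := by
  rw [dpdSummand_eq_youngGap hγ hq]
  have hyoung := young_inequality_of_nonneg hp (rpow_nonneg hq γ) (holderConjugate_add_one_div hγ)
  exact mul_nonneg (by positivity) (sub_nonneg.mpr hyoung)

lemma dpdSummand_eq_zero_iff (hγ : 0 < γ) (hp : 0 ≤ p) (hq : 0 ≤ q) :
    dpdSummand γ p q = 0 ↔ p = q := by
  rw [dpdSummand_eq_youngGap hγ hq, mul_eq_zero_iff_left (by positivity), sub_eq_zero,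
    eq_comm, young_inequality_eq_iff_of_nonneg hp (rpow_nonneg hq γ)
      (holderConjugate_add_one_div hγ), rpow_rpow_add_one_div hγ.ne' hq,
    rpow_left_inj hp hq (by positivity)]

end

theorem dpd_nonneg_and_eq_zero_iff_general (γ p₁ p₂ q₁ q₂ : ℝ) (hγ : 0 < γ)
    (hp₁ : p₁ ∈ Set.Ioo (0:ℝ) 1) (hp₂ : p₂ ∈ Set.Ioo (0:ℝ) 1)
    (hq₁ : q₁ ∈ Set.Ioo (0:ℝ) 1) (hq₂ : q₂ ∈ Set.Ioo (0:ℝ) 1) :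
    0 ≤ (q₁ ^ (γ + 1) + q₂ ^ (γ + 1)) -
          ((γ + 1) / γ) * (p₁ * q₁ ^ γ + p₂ * q₂ ^ γ) +
          (1 / γ) * (p₁ ^ (γ + 1) + p₂ ^ (γ + 1)) ∧
    ((q₁ ^ (γ + 1) + q₂ ^ (γ + 1)) -
          ((γ + 1) / γ) * (p₁ * q₁ ^ γ + p₂ * q₂ ^ γ) +
          (1 / γ) * (p₁ ^ (γ + 1) + p₂ ^ (γ + 1)) = 0 ↔ p₁ = q₁ ∧ p₂ = q₂) := by
  have hsum : (q₁ ^ (γ + 1) + q₂ ^ (γ + 1)) -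
        ((γ + 1) / γ) * (p₁ * q₁ ^ γ + p₂ * q₂ ^ γ) +
        (1 / γ) * (p₁ ^ (γ + 1) + p₂ ^ (γ + 1)) = dpdSummand γ p₁ q₁ + dpdSummand γ p₂ q₂ := by
    simp only [dpdSummand]
    ring
  have h₁ := dpdSummand_nonneg hγ hp₁.1.le hq₁.1.le
  have h₂ := dpdSummand_nonneg hγ hp₂.1.le hq₂.1.le
  rw [hsum, add_eq_zero_iff_of_nonneg h₁ h₂, dpdSummand_eq_zero_iff hγ hp₁.1.le hq₁.1.le,
    dpdSummand_eq_zero_iff hγ hp₂.1.le hq₂.1.le]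
  exact ⟨add_nonneg h₁ h₂, Iff.rfl⟩

/-- The density power divergence with `γ > 0` between two-point probability vectors is
nonnegative, and vanishes iff the two vectors coincide. -/
theorem dpd_nonneg_and_eq_zero_iff (γ p₁ p₂ q₁ q₂ : ℝ) (hγ : 0 < γ)
    (hp₁ : p₁ ∈ Set.Ioo (0:ℝ) 1) (hp₂ : p₂ ∈ Set.Ioo (0:ℝ) 1)
    (hq₁ : q₁ ∈ Set.Ioo (0:ℝ) 1) (hq₂ : q₂ ∈ Set.Ioo (0:ℝ) 1)
    (hp : p₁ + p₂ = 1) (hq : q₁ + q₂ = 1) :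
    0 ≤ (q₁ ^ (γ + 1) + q₂ ^ (γ + 1)) -
          ((γ + 1) / γ) * (p₁ * q₁ ^ γ + p₂ * q₂ ^ γ) +
          (1 / γ) * (p₁ ^ (γ + 1) + p₂ ^ (γ + 1)) ∧
    ((q₁ ^ (γ + 1) + q₂ ^ (γ + 1)) -
          ((γ + 1) / γ) * (p₁ * q₁ ^ γ + p₂ * q₂ ^ γ) +
          (1 / γ) * (p₁ ^ (γ + 1) + p₂ ^ (γ + 1)) = 0 ↔ p₁ = q₁ ∧ p₂ = q₂) :=
  dpd_nonneg_and_eq_zero_iff_general γ p₁ p₂ q₁ q₂ hγ hp₁ hp₂ hq₁ hq₂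
end
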